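/- Let 𝒢 = {(A_1, a_1), …, (A_K, a_K)} be a finite set of elements of SA(2,ℤ) such that the subsemigroup ⟨A_1, …, A_K⟩ of SL(2,ℤ) is a group which is infinite cyclic and generated by a twisted inversion A. Then the subsemigroup ⟨𝒢⟩ of SA(2,ℤ) is a group. -/

import Mathlib

open scoped Matrix

abbrev SL2Z := Matrix.SpecialLinearGroup (Fin 2) ℤ

/-- The special affine group `SA(2, ℤ) = ℤ² ⋊ SL(2, ℤ)`, as pairs `(A, a)`. -/
@[ext]
structure SA2 : Type where
  lin : SL2Z
  trans : Fin 2 → ℤ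

namespace SA2

instance : Mul SA2 :=
  ⟨fun p q => ⟨p.lin * q.lin, (p.lin : Matrix (Fin 2) (Fin 2) ℤ) *ᵥ q.trans + p.trans⟩⟩

instance : One SA2 := ⟨⟨1, 0⟩⟩

instance : Inv SA2 :=
  ⟨fun p => ⟨p.lin⁻¹, -(((p.lin⁻¹ : SL2Z) : Matrix (Fin 2) (Fin 2) ℤ) *ᵥ p.trans)⟩⟩

@[simp] lemma mul_lin (p q : SA2) : (p * q).lin = p.lin * q.lin := rfl
@[simp] lemma mul_trans (p q : SA2) :
    (p * q).trans = (p.lin : Matrix (Fin 2) (Fin 2) ℤ) *ᵥ q.trans + p.trans := rfl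
@[simp] lemma one_lin : (1 : SA2).lin = 1 := rfl
@[simp] lemma one_trans : (1 : SA2).trans = 0 := rfl
@[simp] lemma inv_lin (p : SA2) : (p⁻¹).lin = p.lin⁻¹ := rfl
@[simp] lemma inv_trans (p : SA2) :
    (p⁻¹).trans = -(((p.lin⁻¹ : SL2Z) : Matrix (Fin 2) (Fin 2) ℤ) *ᵥ p.trans) := rfl

instance : Group SA2 where
  mul_assoc a b c := by
    ext i
    · rw [mul_lin, mul_lin, mul_lin, mul_lin, mul_assoc]
    · simp only [mul_trans, mul_lin, Matrix.SpecialLinearGroup.coe_mul, Matrix.mulVec_add,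
        Matrix.mulVec_mulVec, add_assoc]
  one_mul a := by
    ext i
    · simp
    · simp
  mul_one a := by
    ext i
    · simp
    · simp [Matrix.mulVec_zero]
  inv_mul_cancel a := by
    ext i
    · simp
    · simp only [mul_trans, inv_lin, inv_trans, add_neg_cancel, one_trans]

end SA2

/-- A subsemigroup `S` of a group is a group if it contains the neutral element and
is closed under inverses. -/
def Subsemigroup.IsSubgroup {G : Type*} [Group G] (S : Subsemigroup G) : Prop :=
  (1 : G) ∈ S ∧ ∀ x ∈ S, x⁻¹ ∈ S

/-- A *twisted inversion*: trace `-2` and not `-I`. -/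
def IsTwistedInversion (A : SL2Z) : Prop :=
  Matrix.trace (A : Matrix (Fin 2) (Fin 2) ℤ) = -2 ∧ (A : Matrix (Fin 2) (Fin 2) ℤ) ≠ -1

/-!
The linear parts of `⟨𝒢⟩` form the group `⟨A⟩`, so `⟨𝒢⟩` is a group as soon as its pure
translations `t_v` are closed under negation: for `x ∈ ⟨𝒢⟩` choose `y ∈ ⟨𝒢⟩` with inverse linear
part, then `x⁻¹ = y (x y)⁻¹`. Choose `g, h ∈ ⟨𝒢⟩` with linear parts `A` and `A⁻¹`, and let `t_d`
be the translation `(g h)(h g)`. Since `A + A⁻¹ = (tr A) I = -2 I`, the product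
`(g t_w h)(h t_w g)` is the translation `t_{d - 2w}`. For `w = d` this gives `t_{-d}`, and then
`t_{d - 2v} t_v t_{-d} = t_{-v}`.
-/

namespace Subsemigroup

variable {G H : Type*} [Group G] [Group H]

theorem inv_mem_of_map_inv_mem_of_ker_inv_mem {S : Subsemigroup G} (f : G →ₙ* H)
    (hmap : ∀ y ∈ S.map f, y⁻¹ ∈ S.map f) (hker : ∀ x ∈ S, f x = 1 → x⁻¹ ∈ S) :
    ∀ x ∈ S, x⁻¹ ∈ S := by
  intro x hx
  obtain ⟨y, hy, hfy⟩ := hmap (f x) (mem_map_of_mem f hx)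
  have hxy : f (x * y) = 1 := by rw [map_mul, hfy, mul_inv_cancel]
  simpa using mul_mem hy (hker _ (mul_mem hx hy) hxy)

theorem isSubgroup_of_inv_mem {S : Subsemigroup G} (hne : (S : Set G).Nonempty)
    (hinv : ∀ x ∈ S, x⁻¹ ∈ S) : S.IsSubgroup := by
  obtain ⟨x, hx⟩ := hne
  exact ⟨by simpa using mul_mem hx (hinv x hx), hinv⟩

end Subsemigroup

theorem Matrix.SpecialLinearGroup.coe_add_coe_inv {R : Type*} [CommRing R]
    (A : Matrix.SpecialLinearGroup (Fin 2) R) :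
    (A : Matrix (Fin 2) (Fin 2) R) + ↑A⁻¹ = Matrix.trace (A : Matrix (Fin 2) (Fin 2) R) • 1 := by
  rw [Matrix.SpecialLinearGroup.coe_inv, Matrix.adjugate_fin_two, Matrix.trace_fin_two]
  ext i j
  fin_cases i <;> fin_cases j <;> simp [add_comm]

namespace SA2

def linHom : SA2 →ₙ* SL2Z := ⟨lin, mul_lin⟩

def transl (v : Fin 2 → ℤ) : SA2 := ⟨1, v⟩

theorem transl_add (v w : Fin 2 → ℤ) : transl (v + w) = transl v * transl w := by
  ext <;> simp [transl, add_comm]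

theorem transl_inv (v : Fin 2 → ℤ) : (transl v)⁻¹ = transl (-v) := by
  ext <;> simp [transl]

theorem eq_transl_of_lin_eq_one {x : SA2} (hx : x.lin = 1) : x = transl x.trans := by
  ext <;> simp [transl, hx]

theorem mul_transl (g : SA2) (v : Fin 2 → ℤ) : g * transl v = transl (g.lin *ᵥ v) * g := by
  ext <;> simp [transl, add_comm]

theorem mul_transl_mul_mul_mul_transl_mul {g h : SA2} (hgh : g.lin * h.lin = 1)
    (v : Fin 2 → ℤ) :
    g * transl v * h * (h * transl v * g) =
      transl (g.lin *ᵥ v + h.lin *ᵥ v) * (g * h * (h * g)) := by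
  have hcomm : g * h * transl (h.lin *ᵥ v) = transl (h.lin *ᵥ v) * (g * h) := by
    rw [mul_transl, mul_lin, hgh, Matrix.SpecialLinearGroup.coe_one, Matrix.one_mulVec]
  calc g * transl v * h * (h * transl v * g)
      = transl (g.lin *ᵥ v) * (g * h * transl (h.lin *ᵥ v)) * (h * g) := by
        rw [mul_transl g, mul_transl h]; simp only [mul_assoc]
    _ = transl (g.lin *ᵥ v + h.lin *ᵥ v) * (g * h * (h * g)) := by
        rw [hcomm, transl_add]; simp only [mul_assoc]

theorem transl_neg_mem {S : Subsemigroup SA2} {g h : SA2} (hg : g ∈ S) (hh : h ∈ S)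
    (hgh : h.lin = g.lin⁻¹) (htr : Matrix.trace (g.lin : Matrix (Fin 2) (Fin 2) ℤ) = -2)
    {v : Fin 2 → ℤ} (hv : transl v ∈ S) : transl (-v) ∈ S := by
  have hu : g * h * (h * g) ∈ S := mul_mem (mul_mem hg hh) (mul_mem hh hg)
  have hu_lin : (g * h * (h * g)).lin = 1 := by simp [hgh]
  set d := (g * h * (h * g)).trans
  have hsum : (g.lin : Matrix (Fin 2) (Fin 2) ℤ) + h.lin = (-2 : ℤ) • 1 := by
    rw [hgh, Matrix.SpecialLinearGroup.coe_add_coe_inv, htr]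
  have hd_sub_two_smul : ∀ w, transl w ∈ S → transl ((-2 : ℤ) • w + d) ∈ S := by
    intro w hw
    have := mul_mem (mul_mem (mul_mem hg hw) hh) (mul_mem (mul_mem hh hw) hg)
    rwa [mul_transl_mul_mul_mul_transl_mul (by simp [hgh]), ← Matrix.add_mulVec, hsum,
      Matrix.smul_mulVec, Matrix.one_mulVec, eq_transl_of_lin_eq_one hu_lin, ← transl_add] at this
  have hd : transl (-d) ∈ S := by
    have := hd_sub_two_smul d (eq_transl_of_lin_eq_one hu_lin ▸ hu)
    rwa [show (-2 : ℤ) • d + d = -d by module] at this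
  have := mul_mem (mul_mem (hd_sub_two_smul v hv) hv) hd
  rwa [← transl_add, ← transl_add, show (-2 : ℤ) • v + d + v + -d = -v by module] at this

end SA2

theorem sa2_closure_isGroup_of_twisted_inversion_generator_general
    (K : ℕ) (Afam : Fin K → SL2Z) (a : Fin K → Fin 2 → ℤ) (A : SL2Z)
    (hgen : (Subsemigroup.closure (Set.range Afam) : Set SL2Z)
        = (Subgroup.zpowers A : Set SL2Z))
    (hA : IsTwistedInversion A) :
    (Subsemigroup.closure (Set.range fun i => SA2.mk (Afam i) (a i))).IsSubgroup := by
  set S := Subsemigroup.closure (Set.range fun i => SA2.mk (Afam i) (a i))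
  have hmap : (S.map SA2.linHom : Set SL2Z) = Subgroup.zpowers A := by
    rw [MulHom.map_mclosure, ← Set.range_comp]
    exact hgen
  have hlift : ∀ B ∈ Subgroup.zpowers A, ∃ g ∈ S, g.lin = B := fun B hB => by
    rwa [← SetLike.mem_coe, ← hmap] at hB
  obtain ⟨g, hg, hgA⟩ := hlift A (Subgroup.mem_zpowers A)
  obtain ⟨h, hh, hhA⟩ := hlift A⁻¹ (inv_mem (Subgroup.mem_zpowers A))
  subst hgA
  refine Subsemigroup.isSubgroup_of_inv_mem ⟨g, hg⟩
    (Subsemigroup.inv_mem_of_map_inv_mem_of_ker_inv_mem SA2.linHom ?_ ?_)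
  · intro B hB
    rw [← SetLike.mem_coe, hmap] at hB ⊢
    exact inv_mem hB
  · intro x hx hx_lin
    rw [SA2.eq_transl_of_lin_eq_one hx_lin] at hx ⊢
    rw [SA2.transl_inv]
    exact SA2.transl_neg_mem hg hh hhA hA.1 hx

/-- If the subsemigroup `⟨A_1, …, A_K⟩` of `SL(2,ℤ)` is a group which
is infinite cyclic generated by a twisted inversion `A`, then the subsemigroup of
`SA(2,ℤ)` generated by `𝒢 = {(A_1,a_1), …, (A_K,a_K)}` is a group. -/
theorem sa2_closure_isGroup_of_twisted_inversion_generator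
    (K : ℕ) (hK : 0 < K) (Afam : Fin K → SL2Z) (a : Fin K → Fin 2 → ℤ) (A : SL2Z)
    (hgrp : (Subsemigroup.closure (Set.range Afam)).IsSubgroup)
    (hgen : (Subsemigroup.closure (Set.range Afam) : Set SL2Z)
        = (Subgroup.zpowers A : Set SL2Z))
    (hinf : Function.Injective fun n : ℤ => A ^ n)
    (hA : IsTwistedInversion A) :
    (Subsemigroup.closure (Set.range fun i => SA2.mk (Afam i) (a i))).IsSubgroup :=
  sa2_closure_isGroup_of_twisted_inversion_generator_general K Afam a A hgen hA
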